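/- arXiv:2003.04846 — 3 statements merged into one kernel-verified Lean document; each statement's English description precedes it below -/
import Mathlib

section
/- Let X : Σ → ℝⁿ be an immersed surface with induced metric, weighted by f : ℝⁿ → ℝ of class C², and let H_f = H + (∇f)^⊥ be the weighted mean curvature vector. In local isothermal coordinates z with metric α|dz|², let P^ν = ⟨∇_{X_z} X_z, ν⟩ for a normal field ν with ∇^⊥ν = 0, and Q^ν = e^{-f/2} P^ν. Then ∂Q^ν/∂z̄ = (α/4) e^{-f/2} [ ∂_z⟨H_f, ν⟩ - Hess f(X_z, ν) + (1/2)⟨H_f - ∇f, ν⟩⟨∇f, X_z⟩ ]. -/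
/-- Wirtinger derivative `∂f/∂z = (1/2)(∂f/∂x - i ∂f/∂y)`. -/
noncomputable def wz (f : ℂ → ℂ) (z : ℂ) : ℂ :=
  (1 / 2) * (fderiv ℝ f z 1 - Complex.I * fderiv ℝ f z Complex.I)

/-- Wirtinger derivative `∂f/∂z̄ = (1/2)(∂f/∂x + i ∂f/∂y)`. -/
noncomputable def wzbar (f : ℂ → ℂ) (z : ℂ) : ℂ :=
  (1 / 2) * (fderiv ℝ f z 1 + Complex.I * fderiv ℝ f z Complex.I)

/-- Componentwise Wirtinger `∂/∂z` for vector-valued functions. -/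
noncomputable def vwz {n : ℕ} (f : ℂ → Fin n → ℂ) (z : ℂ) : Fin n → ℂ :=
  fun i => wz (fun w => f w i) z

/-- Componentwise Wirtinger `∂/∂z̄` for vector-valued functions. -/
noncomputable def vwzbar {n : ℕ} (f : ℂ → Fin n → ℂ) (z : ℂ) : Fin n → ℂ :=
  fun i => wzbar (fun w => f w i) z

/-- Complex-bilinear extension of the Euclidean dot product. -/
noncomputable def cdot {n : ℕ} (u v : Fin n → ℂ) : ℂ := ∑ i, u i * v i

/-- The complexified immersion. -/
noncomputable def XC {n : ℕ} (X : ℂ → Fin n → ℝ) : ℂ → Fin n → ℂ := fun z i => (X z i : ℂ)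

/-- `X_z`. -/
noncomputable def Xz {n : ℕ} (X : ℂ → Fin n → ℝ) : ℂ → Fin n → ℂ := vwz (XC X)

/-- `X_z̄`. -/
noncomputable def Xzbar {n : ℕ} (X : ℂ → Fin n → ℝ) : ℂ → Fin n → ℂ := vwzbar (XC X)

/-- The Hopf differential coefficient `P^ν = ⟨∇_{X_z}X_z, ν⟩`. -/
noncomputable def Pnu {n : ℕ} (X ν : ℂ → Fin n → ℝ) (z : ℂ) : ℂ :=
  cdot (vwz (Xz X) z) (XC ν z)

/-- The mean curvature vector `H`, defined by `∇_{X_z̄}X_z = (α/4)H`. -/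
noncomputable def Hvec {n : ℕ} (X : ℂ → Fin n → ℝ) (α : ℂ → ℝ) (z : ℂ) : Fin n → ℂ :=
  (4 / (α z : ℂ)) • vwzbar (Xz X) z

/-- The (complexified) ambient gradient of the weight `f`, evaluated along `X`. -/
noncomputable def gradC {n : ℕ} (f : (Fin n → ℝ) → ℝ) (X : ℂ → Fin n → ℝ) (z : ℂ) :
    Fin n → ℂ :=
  fun i => ((fderiv ℝ f (X z) (Pi.single i 1) : ℝ) : ℂ)

/-- The complex-bilinear Hessian of the weight `f` at `X z`, applied to two
complexified vectors. -/
noncomputable def hessC {n : ℕ} (f : (Fin n → ℝ) → ℝ) (X : ℂ → Fin n → ℝ) (z : ℂ)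
    (u v : Fin n → ℂ) : ℂ :=
  ∑ i, ∑ j, u i * v j *
    ((fderiv ℝ (fun x => fderiv ℝ f x (Pi.single j 1)) (X z) (Pi.single i 1) : ℝ) : ℂ)

open Complex

section WirtingerAux
noncomputable def wmap (p q : ℂ) : ℂ →L[ℝ] ℂ :=
  p • (ContinuousLinearMap.id ℝ ℂ) + q • (Complex.conjCLE : ℂ ≃L[ℝ] ℂ).toContinuousLinearMap

@[simp] lemma wmap_apply (p q e : ℂ) : wmap p q e = p * e + q * (starRingEnd ℂ) e := by
  simp [wmap, smul_eq_mul]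

def HasW (h : ℂ → ℂ) (z p q : ℂ) : Prop := HasFDerivAt h (wmap p q) z

lemma conj_eq (e : ℂ) : (starRingEnd ℂ) e = (e.re : ℂ) - e.im * Complex.I := by
  apply Complex.ext <;> simp

lemma HasW.diffAt {h : ℂ → ℂ} {z p q : ℂ} (hh : HasW h z p q) :
    DifferentiableAt ℝ h z := hh.differentiableAt

lemma HasW.wz_eq {h : ℂ → ℂ} {z p q : ℂ} (hh : HasW h z p q) : wz h z = p := by
  have h0 : fderiv ℝ h z = wmap p q := hh.fderiv
  rw [wz, h0]
  simp [conj_eq]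
  linear_combination ((q-p)/2) * Complex.I_sq

lemma HasW.wzbar_eq {h : ℂ → ℂ} {z p q : ℂ} (hh : HasW h z p q) : wzbar h z = q := by
  have h0 : fderiv ℝ h z = wmap p q := hh.fderiv
  rw [wzbar, h0]
  simp [conj_eq]
  linear_combination ((p-q)/2) * Complex.I_sq

lemma DifferentiableAt.hasW {h : ℂ → ℂ} {z : ℂ} (hd : DifferentiableAt ℝ h z) :
    HasW h z (wz h z) (wzbar h z) := by
  have hf := hd.hasFDerivAt
  have h0 : fderiv ℝ h z = wmap (wz h z) (wzbar h z) := by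
    ext e
    have he : e = e.re • (1:ℂ) + e.im • Complex.I := by
      simp [Complex.real_smul, Complex.re_add_im]
    calc fderiv ℝ h z e = fderiv ℝ h z (e.re • (1:ℂ) + e.im • Complex.I) := by rw [← he]
    _ = e.re • fderiv ℝ h z 1 + e.im • fderiv ℝ h z Complex.I := by
        rw [map_add, map_smul, map_smul]
    _ = wmap (wz h z) (wzbar h z) e := by
        have he' : e = (e.re:ℂ) + e.im * Complex.I := (Complex.re_add_im e).symm
        simp [wz, wzbar, conj_eq, Complex.real_smul]
        linear_combination (-(fderiv ℝ h z 1)/2 + fderiv ℝ h z Complex.I * Complex.I/2) * he' + (e.im:ℂ) * fderiv ℝ h z Complex.I * Complex.I_sq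
  rw [h0] at hf
  exact hf

lemma HasW.congr_nhds {h g : ℂ → ℂ} {z p q : ℂ} (hh : HasW h z p q)
    (he : g =ᶠ[nhds z] h) : HasW g z p q :=
  HasFDerivAt.congr_of_eventuallyEq hh he

lemma hasW_const (c z : ℂ) : HasW (fun _ => c) z 0 0 := by
  have : wmap 0 0 = 0 := by ext e; simp
  unfold HasW; rw [this]; exact hasFDerivAt_const c z

lemma HasW.add {h g : ℂ → ℂ} {z p q p' q' : ℂ} (hh : HasW h z p q) (hg : HasW g z p' q') :
    HasW (fun w => h w + g w) z (p + p') (q + q') := by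
  have : wmap (p + p') (q + q') = wmap p q + wmap p' q' := by ext e; simp; ring
  unfold HasW; rw [this]; exact HasFDerivAt.add hh hg

lemma HasW.neg {h : ℂ → ℂ} {z p q : ℂ} (hh : HasW h z p q) :
    HasW (fun w => -h w) z (-p) (-q) := by
  have : wmap (-p) (-q) = -wmap p q := by ext e; simp; ring
  unfold HasW; rw [this]; exact HasFDerivAt.neg hh

lemma HasW.sub {h g : ℂ → ℂ} {z p q p' q' : ℂ} (hh : HasW h z p q) (hg : HasW g z p' q') :
    HasW (fun w => h w - g w) z (p - p') (q - q') := by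
  have : wmap (p - p') (q - q') = wmap p q - wmap p' q' := by ext e; simp; ring
  unfold HasW; rw [this]; exact HasFDerivAt.sub hh hg

lemma HasW.mul {h g : ℂ → ℂ} {z p q p' q' : ℂ} (hh : HasW h z p q) (hg : HasW g z p' q') :
    HasW (fun w => h w * g w) z (p * g z + h z * p') (q * g z + h z * q') := by
  have key := HasFDerivAt.mul hh hg
  have : wmap (p * g z + h z * p') (q * g z + h z * q')
      = h z • wmap p' q' + g z • wmap p q := by ext e; simp [smul_eq_mul]; ring
  unfold HasW; rw [this]; exact key

lemma HasW.const_mul {h : ℂ → ℂ} {z p q : ℂ} (c : ℂ) (hh : HasW h z p q) :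
    HasW (fun w => c * h w) z (c * p) (c * q) := by
  have := (hasW_const c z).mul hh
  simpa using this

lemma hasW_sum {ι : Type*} (s : Finset ι) {F : ι → ℂ → ℂ} {z : ℂ} {p q : ι → ℂ}
    (hF : ∀ i ∈ s, HasW (F i) z (p i) (q i)) :
    HasW (fun w => ∑ i ∈ s, F i w) z (∑ i ∈ s, p i) (∑ i ∈ s, q i) := by
  classical
  induction s using Finset.induction with
  | empty => simpa using hasW_const 0 z
  | insert _ _ hx ih =>
    rename_i a s'
    rw [Finset.sum_insert hx]
    have h1 := hF a (Finset.mem_insert_self a s')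
    have h2 := ih (fun i hi => hF i (Finset.mem_insert_of_mem hi))
    have h3 := HasW.congr_nhds (h1.add h2)
      (Filter.Eventually.of_forall (fun w => by simp [Finset.sum_insert hx] :
        ∀ w, ∑ i ∈ insert a s', F i w = F a w + ∑ i ∈ s', F i w))
    simpa [Finset.sum_insert hx] using h3

lemma HasW.expComp {h : ℂ → ℂ} {z p q : ℂ} (hh : HasW h z p q) :
    HasW (fun w => Complex.exp (h w)) z (Complex.exp (h z) * p) (Complex.exp (h z) * q) := by
  have hexp : HasFDerivAt Complex.exp
      (((1 : ℂ →L[ℂ] ℂ).smulRight (Complex.exp (h z))).restrictScalars ℝ) (h z) :=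
    (Complex.hasDerivAt_exp (h z)).hasFDerivAt.restrictScalars ℝ
  have key := hexp.comp z hh
  have heq : (((1 : ℂ →L[ℂ] ℂ).smulRight (Complex.exp (h z))).restrictScalars ℝ).comp (wmap p q)
      = wmap (Complex.exp (h z) * p) (Complex.exp (h z) * q) := by
    ext e; simp [smul_eq_mul]; ring
  unfold HasW; rw [← heq]; exact key

lemma HasW.real {r : ℂ → ℝ} {z p q : ℂ} (hr : HasW (fun w => ((r w : ℝ) : ℂ)) z p q) :
    q = (starRingEnd ℂ) p := by
  have hd : DifferentiableAt ℝ r z := by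
    have := (Complex.reCLM.differentiableAt (x := ((r z : ℝ) : ℂ))).comp z hr.diffAt
    simpa [Function.comp_def] using this
  have hcomp : fderiv ℝ (fun w => ((r w : ℝ) : ℂ)) z
      = Complex.ofRealCLM.comp (fderiv ℝ r z) := by
    have h0 := fderiv_comp (𝕜 := ℝ) z (Complex.ofRealCLM.differentiableAt (x := r z)) hd
    have h2 : (fun w => ((r w : ℝ) : ℂ)) = (⇑Complex.ofRealCLM ∘ r) := rfl
    rw [h2, h0, ContinuousLinearMap.fderiv]
  have h' : wmap p q = Complex.ofRealCLM.comp (fderiv ℝ r z) := by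
    rw [← hcomp]; exact hr.fderiv.symm
  have e1 : p + q = ((fderiv ℝ r z 1 : ℝ) : ℂ) := by
    have := congrArg (fun L : ℂ →L[ℝ] ℂ => L 1) h'; simpa using this
  have e2 : p * Complex.I - q * Complex.I = ((fderiv ℝ r z Complex.I : ℝ) : ℂ) := by
    have := congrArg (fun L : ℂ →L[ℝ] ℂ => L Complex.I) h'
    simp at this; linear_combination this
  have ce1 : (starRingEnd ℂ) p + (starRingEnd ℂ) q = ((fderiv ℝ r z 1 : ℝ) : ℂ) := by
    have := congrArg (starRingEnd ℂ) e1; simpa using this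
  have ce2 : ((starRingEnd ℂ) q - (starRingEnd ℂ) p) * Complex.I
      = ((fderiv ℝ r z Complex.I : ℝ) : ℂ) := by
    have := congrArg (starRingEnd ℂ) e2
    simp at this; linear_combination this
  linear_combination e1/2 - ce1/2 + Complex.I/2 * e2 - Complex.I/2 * ce2
    - (p - q + (starRingEnd ℂ) p - (starRingEnd ℂ) q)/2 * Complex.I_sq

-- chunk 3: congr for wz, smoothness, commutation
lemma wz_congrOn {h g : ℂ → ℂ} {U : Set ℂ} (hU : IsOpen U) (he : Set.EqOn g h U)
    {z : ℂ} (hz : z ∈ U) : wz g z = wz h z := by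
  have hev : g =ᶠ[nhds z] h := Filter.eventuallyEq_of_mem (hU.mem_nhds hz) he
  unfold wz; rw [hev.fderiv_eq]

lemma wzbar_congrOn {h g : ℂ → ℂ} {U : Set ℂ} (hU : IsOpen U) (he : Set.EqOn g h U)
    {z : ℂ} (hz : z ∈ U) : wzbar g z = wzbar h z := by
  have hev : g =ᶠ[nhds z] h := Filter.eventuallyEq_of_mem (hU.mem_nhds hz) he
  unfold wzbar; rw [hev.fderiv_eq]

lemma contDiffOn_wz {h : ℂ → ℂ} {U : Set ℂ} (hU : IsOpen U)
    (hh : ContDiffOn ℝ (⊤ : ℕ∞) h U) : ContDiffOn ℝ (⊤ : ℕ∞) (fun w => wz h w) U := by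
  have hd : ContDiffOn ℝ (⊤ : ℕ∞) (fderiv ℝ h) U := hh.fderiv_of_isOpen hU (by simp)
  have h1 : ContDiffOn ℝ (⊤ : ℕ∞) (fun w => fderiv ℝ h w 1) U := hd.clm_apply contDiffOn_const
  have h2 : ContDiffOn ℝ (⊤ : ℕ∞) (fun w => fderiv ℝ h w Complex.I) U := hd.clm_apply contDiffOn_const
  exact (contDiffOn_const.mul (h1.sub (contDiffOn_const.mul h2)))

lemma contDiffOn_wzbar {h : ℂ → ℂ} {U : Set ℂ} (hU : IsOpen U)
    (hh : ContDiffOn ℝ (⊤ : ℕ∞) h U) : ContDiffOn ℝ (⊤ : ℕ∞) (fun w => wzbar h w) U := by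
  have hd : ContDiffOn ℝ (⊤ : ℕ∞) (fderiv ℝ h) U := hh.fderiv_of_isOpen hU (by simp)
  have h1 : ContDiffOn ℝ (⊤ : ℕ∞) (fun w => fderiv ℝ h w 1) U := hd.clm_apply contDiffOn_const
  have h2 : ContDiffOn ℝ (⊤ : ℕ∞) (fun w => fderiv ℝ h w Complex.I) U := hd.clm_apply contDiffOn_const
  exact (contDiffOn_const.mul (h1.add (contDiffOn_const.mul h2)))

lemma diffAt_of_smoothOn {h : ℂ → ℂ} {U : Set ℂ} (hU : IsOpen U)
    (hh : ContDiffOn ℝ (⊤ : ℕ∞) h U) {z : ℂ} (hz : z ∈ U) : DifferentiableAt ℝ h z :=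
  (hh.contDiffAt (hU.mem_nhds hz)).differentiableAt (by simp)

lemma wz_wzbar_comm {h : ℂ → ℂ} {z : ℂ} (hh : ContDiffAt ℝ 2 h z) :
    wzbar (fun w => wz h w) z = wz (fun w => wzbar h w) z := by
  have hdF : DifferentiableAt ℝ (fderiv ℝ h) z :=
    (hh.fderiv_right (m := 1) le_rfl).differentiableAt one_ne_zero
  have hsymm : IsSymmSndFDerivAt ℝ h z := hh.isSymmSndFDerivAt (by simp [minSmoothness_of_isRCLikeNormedField])
  have hA : DifferentiableAt ℝ (fun w => fderiv ℝ h w 1) z :=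
    hdF.clm_apply (differentiableAt_const _)
  have hB : DifferentiableAt ℝ (fun w => fderiv ℝ h w Complex.I) z :=
    hdF.clm_apply (differentiableAt_const _)
  have hDA : ∀ v : ℂ, fderiv ℝ (fun w => fderiv ℝ h w 1) z v
      = fderiv ℝ (fderiv ℝ h) z v 1 := by
    intro v
    rw [fderiv_clm_apply hdF (differentiableAt_const _)]
    simp
  have hDB : ∀ v : ℂ, fderiv ℝ (fun w => fderiv ℝ h w Complex.I) z v
      = fderiv ℝ (fderiv ℝ h) z v Complex.I := by
    intro v
    rw [fderiv_clm_apply hdF (differentiableAt_const _)]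
    simp
  -- HasW for A and B
  have hAW := hA.hasW
  have hBW := hB.hasW
  -- wz h as combination
  have hwz : HasW (fun w => wz h w) z
      ((1/2) * (wz (fun w => fderiv ℝ h w 1) z - Complex.I * wz (fun w => fderiv ℝ h w Complex.I) z))
      ((1/2) * (wzbar (fun w => fderiv ℝ h w 1) z - Complex.I * wzbar (fun w => fderiv ℝ h w Complex.I) z)) := by
    exact HasW.const_mul _ (hAW.sub (HasW.const_mul _ hBW))
  have hwzb : HasW (fun w => wzbar h w) z
      ((1/2) * (wz (fun w => fderiv ℝ h w 1) z + Complex.I * wz (fun w => fderiv ℝ h w Complex.I) z))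
      ((1/2) * (wzbar (fun w => fderiv ℝ h w 1) z + Complex.I * wzbar (fun w => fderiv ℝ h w Complex.I) z)) := by
    exact HasW.const_mul _ (hAW.add (HasW.const_mul _ hBW))
  rw [hwz.wzbar_eq, hwzb.wz_eq]
  -- now express wz/wzbar of A, B via second derivative entries
  have hS := hsymm.eq
  unfold wz wzbar
  rw [hDA 1, hDA Complex.I, hDB 1, hDB Complex.I]
  rw [hS Complex.I 1]
  ring

-- chunk 4: chain rule through a real function of several variables
lemma hasW_comp_real {n : ℕ} {f : (Fin n → ℝ) → ℝ} {X : ℂ → Fin n → ℝ} {z : ℂ}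
    (hf : DifferentiableAt ℝ f (X z)) {p q : Fin n → ℂ}
    (hX : ∀ i, HasW (fun w => ((X w i : ℝ) : ℂ)) z (p i) (q i)) :
    HasW (fun w => ((f (X w) : ℝ) : ℂ)) z
      (∑ i, ((fderiv ℝ f (X z) (Pi.single i 1) : ℝ) : ℂ) * p i)
      (∑ i, ((fderiv ℝ f (X z) (Pi.single i 1) : ℝ) : ℂ) * q i) := by
  classical
  set R : Fin n → (ℂ →L[ℝ] ℝ) := fun i => Complex.reCLM.comp (wmap (p i) (q i)) with hR
  have hXi : ∀ i, HasFDerivAt (fun w => X w i) (R i) z := by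
    intro i
    have := (Complex.reCLM.hasFDerivAt (x := ((X z i : ℝ) : ℂ))).comp z (hX i)
    simpa [Function.comp_def] using this
  have key : ∀ i e, ((R i e : ℝ) : ℂ) = wmap (p i) (q i) e := by
    intro i e
    have h1 : HasFDerivAt (fun w => ((X w i : ℝ) : ℂ)) (Complex.ofRealCLM.comp (R i)) z :=
      (Complex.ofRealCLM.hasFDerivAt (x := X z i)).comp z (hXi i)
    have h2 : wmap (p i) (q i) = Complex.ofRealCLM.comp (R i) := (hX i).unique h1
    rw [h2]; rfl
  have hXd : HasFDerivAt X (ContinuousLinearMap.pi R) z := hasFDerivAt_pi.2 hXi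
  have hcomp := (hf.hasFDerivAt.comp z hXd)
  have hfinal := (Complex.ofRealCLM.hasFDerivAt (x := f (X z))).comp z hcomp
  have heq : Complex.ofRealCLM.comp ((fderiv ℝ f (X z)).comp (ContinuousLinearMap.pi R))
      = wmap (∑ i, ((fderiv ℝ f (X z) (Pi.single i 1) : ℝ) : ℂ) * p i)
             (∑ i, ((fderiv ℝ f (X z) (Pi.single i 1) : ℝ) : ℂ) * q i) := by
    ext e
    have hdec : (fun i => R i e) = ∑ i : Fin n, Pi.single i (R i e) := by
      rw [Finset.univ_sum_single (fun i => R i e)]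
    have hsingle : ∀ i : Fin n, (Pi.single i (R i e) : Fin n → ℝ)
        = (R i e) • (Pi.single i (1:ℝ) : Fin n → ℝ) := by
      intro i
      rw [← Pi.single_smul, smul_eq_mul, mul_one]
    calc (Complex.ofRealCLM.comp ((fderiv ℝ f (X z)).comp (ContinuousLinearMap.pi R))) e
        = ((fderiv ℝ f (X z) (fun i => R i e) : ℝ) : ℂ) := rfl
      _ = ((fderiv ℝ f (X z) (∑ i : Fin n, Pi.single i (R i e)) : ℝ) : ℂ) := by rw [← hdec]
      _ = ((∑ i : Fin n, (R i e) * fderiv ℝ f (X z) (Pi.single i 1) : ℝ) : ℂ) := by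
          rw [map_sum]
          congr 1
          refine Finset.sum_congr rfl fun i _ => ?_
          rw [hsingle i, map_smul, smul_eq_mul]
      _ = ∑ i : Fin n, ((R i e : ℝ) : ℂ) * ((fderiv ℝ f (X z) (Pi.single i 1) : ℝ) : ℂ) := by
          push_cast; ring
      _ = ∑ i : Fin n, (wmap (p i) (q i) e) * ((fderiv ℝ f (X z) (Pi.single i 1) : ℝ) : ℂ) := by
          refine Finset.sum_congr rfl fun i _ => ?_; rw [key i e]
      _ = wmap (∑ i, ((fderiv ℝ f (X z) (Pi.single i 1) : ℝ) : ℂ) * p i)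
             (∑ i, ((fderiv ℝ f (X z) (Pi.single i 1) : ℝ) : ℂ) * q i) e := by
          simp [Finset.sum_mul, Finset.mul_sum]
          rw [← Finset.sum_add_distrib]
          refine Finset.sum_congr rfl fun i _ => ?_
          ring
  rw [heq] at hfinal
  exact hfinal

lemma cdot_comm {n : ℕ} (u v : Fin n → ℂ) : cdot u v = cdot v u := by
  unfold cdot; exact Finset.sum_congr rfl fun i _ => mul_comm _ _

lemma cdot_add_left {n : ℕ} (u v w : Fin n → ℂ) : cdot (u + v) w = cdot u w + cdot v w := by
  simp [cdot, add_mul, Finset.sum_add_distrib]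

lemma cdot_smul_left {n : ℕ} (r : ℂ) (u w : Fin n → ℂ) : cdot (r • u) w = r * cdot u w := by
  simp [cdot, Finset.mul_sum, smul_eq_mul, mul_assoc]

lemma cdot_sub_left {n : ℕ} (u v w : Fin n → ℂ) :
    cdot (fun i => u i - v i) w = cdot u w - cdot v w := by
  simp [cdot, sub_mul, Finset.sum_sub_distrib]

lemma hasW_cdot {n : ℕ} {F G : ℂ → Fin n → ℂ} {z : ℂ} {p q p' q' : Fin n → ℂ}
    (hF : ∀ i, HasW (fun w => F w i) z (p i) (q i))
    (hG : ∀ i, HasW (fun w => G w i) z (p' i) (q' i)) :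
    HasW (fun w => cdot (F w) (G w)) z
      (cdot p (G z) + cdot (F z) p') (cdot q (G z) + cdot (F z) q') := by
  have h := hasW_sum Finset.univ (F := fun i w => F w i * G w i)
    (p := fun i => p i * G z i + F z i * p' i) (q := fun i => q i * G z i + F z i * q' i)
    (fun i _ => (hF i).mul (hG i))
  have heq : (fun w => cdot (F w) (G w)) = (fun w => ∑ i, F w i * G w i) := rfl
  rw [heq]
  have e1 : cdot p (G z) + cdot (F z) p' = ∑ i, (p i * G z i + F z i * p' i) := by
    simp [cdot, Finset.sum_add_distrib]
  have e2 : cdot q (G z) + cdot (F z) q' = ∑ i, (q i * G z i + F z i * q' i) := by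
    simp [cdot, Finset.sum_add_distrib]
  rw [e1, e2]; exact h

-- chunk 6 : more small lemmas
lemma HasW.div_const {h : ℂ → ℂ} {z p q : ℂ} (hh : HasW h z p q) (c : ℂ) :
    HasW (fun w => h w / c) z (p / c) (q / c) := by
  have h' := hh.const_mul c⁻¹
  have h'' := h'.congr_nhds
    (Filter.Eventually.of_forall fun w => (by ring : h w / c = c⁻¹ * h w))
  rw [show p / c = c⁻¹ * p by ring, show q / c = c⁻¹ * q by ring]
  exact h''

lemma cdot_comb_right {n : ℕ} (u v w : Fin n → ℂ) (c d : ℂ) :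
    cdot u (fun i => c * v i + d * w i) = c * cdot u v + d * cdot u w := by
  unfold cdot
  rw [Finset.mul_sum, Finset.mul_sum, ← Finset.sum_add_distrib]
  exact Finset.sum_congr rfl fun i _ => by ring

lemma cdot_comb_right' {n : ℕ} (u v w : Fin n → ℂ) (c d : ℂ) :
    cdot u (c • v + d • w) = c * cdot u v + d * cdot u w := by
  unfold cdot
  rw [Finset.mul_sum, Finset.mul_sum, ← Finset.sum_add_distrib]
  refine Finset.sum_congr rfl fun i _ => ?_
  simp [smul_eq_mul]
  ring


end WirtingerAux
/-- Proposition (key tool): for an immersed surface `X : Σ → ℝⁿ` in isothermal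
coordinates with metric `α|dz|²`, weight `f` of class `C²`, weighted mean curvature
vector `H_f = H + (∇f)^⊥`, and parallel unit normal `ν` (`∇^⊥ν = 0`), the function
`Q^ν = e^{-f/2} P^ν` satisfies
`∂Q^ν/∂z̄ = (α/4) e^{-f/2}[∂_z⟨H_f,ν⟩ - Hess f(X_z,ν) + (1/2)⟨H_f-∇f,ν⟩⟨∇f,X_z⟩]`. -/
theorem stmt_11 (n : ℕ) (U : Set ℂ) (hU : IsOpen U)
    (X ν : ℂ → Fin n → ℝ) (α : ℂ → ℝ)
    (f : (Fin n → ℝ) → ℝ) (hf : ContDiff ℝ 2 f)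
    (Hf : ℂ → Fin n → ℂ)
    (hX : ∀ i, ContDiffOn ℝ (⊤ : ℕ∞) (fun z => X z i) U)
    (hν : ∀ i, ContDiffOn ℝ (⊤ : ℕ∞) (fun z => ν z i) U)
    (hα : ContDiffOn ℝ (⊤ : ℕ∞) α U) (hαpos : ∀ z ∈ U, 0 < α z)
    (hiso1 : ∀ z ∈ U, cdot (Xz X z) (Xz X z) = 0)
    (hiso2 : ∀ z ∈ U, cdot (Xz X z) (Xzbar X z) = (α z : ℂ) / 2)
    (hunit : ∀ z ∈ U, ∑ i, ν z i ^ 2 = 1)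
    (hnormal : ∀ z ∈ U, cdot (Xz X z) (XC ν z) = 0)
    (hpar : ∀ z ∈ U, ∃ a b : ℂ, vwz (XC ν) z = a • Xz X z + b • Xzbar X z)
    -- `H_f = H + (∇f)^⊥`: `H_f` differs from `H + ∇f` by a tangential vector and is
    -- itself normal.
    (hHf1 : ∀ z ∈ U, ∃ a b : ℂ,
      Hf z = Hvec X α z + gradC f X z + a • Xz X z + b • Xzbar X z)
    (hHf2 : ∀ z ∈ U, cdot (Hf z) (Xz X z) = 0 ∧ cdot (Hf z) (Xzbar X z) = 0) :
    ∀ z ∈ U,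
      wzbar (fun w => Complex.exp (-(f (X w) : ℂ) / 2) * Pnu X ν w) z =
        ((α z : ℂ) / 4) * Complex.exp (-(f (X z) : ℂ) / 2) *
          (wz (fun w => cdot (Hf w) (XC ν w)) z
            - hessC f X z (Xz X z) (XC ν z)
            + (1 / 2) * cdot (fun i => Hf z i - gradC f X z i) (XC ν z) *
                cdot (gradC f X z) (Xz X z)) := by
  intro z hz
  classical
  have hmem : U ∈ nhds z := hU.mem_nhds hz
  have hα0 : ∀ w ∈ U, ((α w : ℝ) : ℂ) ≠ 0 := fun w hw => Complex.ofReal_ne_zero.mpr (hαpos w hw).ne'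
  -- smoothness of components
  have hXCc : ∀ i, ContDiffOn ℝ (⊤ : ℕ∞) (fun w => XC X w i) U := fun i =>
    Complex.ofRealCLM.contDiff.comp_contDiffOn (hX i)
  have hNCc : ∀ i, ContDiffOn ℝ (⊤ : ℕ∞) (fun w => XC ν w i) U := fun i =>
    Complex.ofRealCLM.contDiff.comp_contDiffOn (hν i)
  have hαc : ContDiffOn ℝ (⊤ : ℕ∞) (fun w => ((α w : ℝ) : ℂ)) U := Complex.ofRealCLM.contDiff.comp_contDiffOn hα
  have hZc : ∀ i, ContDiffOn ℝ (⊤ : ℕ∞) (fun w => Xz X w i) U := fun i => contDiffOn_wz hU (hXCc i)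
  have hZbc : ∀ i, ContDiffOn ℝ (⊤ : ℕ∞) (fun w => Xzbar X w i) U := fun i =>
    contDiffOn_wzbar hU (hXCc i)
  have hWc : ∀ i, ContDiffOn ℝ (⊤ : ℕ∞) (fun w => vwz (Xz X) w i) U := fun i =>
    contDiffOn_wz hU (hZc i)
  have hWbc : ∀ i, ContDiffOn ℝ (⊤ : ℕ∞) (fun w => vwzbar (Xz X) w i) U := fun i =>
    contDiffOn_wzbar hU (hZc i)
  have hHc : ∀ i, ContDiffOn ℝ (⊤ : ℕ∞) (fun w => Hvec X α w i) U := by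
    intro i
    have heq : (fun w => Hvec X α w i) = fun w => 4 * (((α w : ℝ) : ℂ))⁻¹ * vwzbar (Xz X) w i := by
      funext w
      show (4 / ((α w : ℝ) : ℂ)) * vwzbar (Xz X) w i = 4 * (((α w : ℝ) : ℂ))⁻¹ * vwzbar (Xz X) w i
      rw [div_eq_mul_inv]
    rw [heq]
    exact ContDiffOn.mul (𝕜 := ℝ)
      (ContDiffOn.mul (𝕜 := ℝ) contDiffOn_const (hαc.inv (fun w hw => hα0 w hw))) (hWbc i)
  -- HasW instances at z
  have hXCW : ∀ i, HasW (fun w => XC X w i) z (Xz X z i) (Xzbar X z i) := fun i =>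
    (diffAt_of_smoothOn hU (hXCc i) hz).hasW
  have hNW : ∀ i, HasW (fun w => XC ν w i) z (vwz (XC ν) z i) (vwzbar (XC ν) z i) := fun i =>
    (diffAt_of_smoothOn hU (hNCc i) hz).hasW
  have hZW : ∀ i, HasW (fun w => Xz X w i) z (vwz (Xz X) z i) (vwzbar (Xz X) z i) := fun i =>
    (diffAt_of_smoothOn hU (hZc i) hz).hasW
  have hZbW : ∀ i, HasW (fun w => Xzbar X w i) z (vwz (Xzbar X) z i) (vwzbar (Xzbar X) z i) :=
    fun i => (diffAt_of_smoothOn hU (hZbc i) hz).hasW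
  have hWfW : ∀ i, HasW (fun w => vwz (Xz X) w i) z
      (wz (fun w => vwz (Xz X) w i) z) (wzbar (fun w => vwz (Xz X) w i) z) := fun i =>
    (diffAt_of_smoothOn hU (hWc i) hz).hasW
  have hHW : ∀ i, HasW (fun w => Hvec X α w i) z
      (vwz (Hvec X α) z i) (vwzbar (Hvec X α) z i) := fun i =>
    (diffAt_of_smoothOn hU (hHc i) hz).hasW
  have hαW : HasW (fun w => ((α w : ℝ) : ℂ)) z (wz (fun w => ((α w : ℝ) : ℂ)) z)
      (wzbar (fun w => ((α w : ℝ) : ℂ)) z) := (diffAt_of_smoothOn hU hαc hz).hasW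
  -- pointwise conjugation facts
  have hconjXz : ∀ w ∈ U, ∀ i, Xzbar X w i = (starRingEnd ℂ) (Xz X w i) := by
    intro w hw i
    exact HasW.real (r := fun w' => X w' i) (diffAt_of_smoothOn hU (hXCc i) hw).hasW
  have hconjN : ∀ i, vwzbar (XC ν) z i = (starRingEnd ℂ) (vwz (XC ν) z i) := fun i =>
    HasW.real (r := fun w' => ν w' i) (hNW i)
  have hZbN0 : ∀ w ∈ U, cdot (Xzbar X w) (XC ν w) = 0 := by
    intro w hw
    have hc : cdot (Xzbar X w) (XC ν w) = (starRingEnd ℂ) (cdot (Xz X w) (XC ν w)) := by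
      unfold cdot
      rw [map_sum]
      refine Finset.sum_congr rfl fun i _ => ?_
      rw [map_mul, ← hconjXz w hw i]
      congr 1
      exact (Complex.conj_ofReal _).symm
    rw [hc, hnormal w hw, map_zero]
  have hZbZb0 : ∀ w ∈ U, cdot (Xzbar X w) (Xzbar X w) = 0 := by
    intro w hw
    have hc : cdot (Xzbar X w) (Xzbar X w) = (starRingEnd ℂ) (cdot (Xz X w) (Xz X w)) := by
      unfold cdot
      rw [map_sum]
      exact Finset.sum_congr rfl fun i _ => by
        rw [map_mul, ← hconjXz w hw i]
    rw [hc, hiso1 w hw, map_zero]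
  have hHfN : ∀ w ∈ U, cdot (Hf w) (XC ν w)
      = cdot (Hvec X α w) (XC ν w) + cdot (gradC f X w) (XC ν w) := by
    intro w hw
    obtain ⟨a', b', hab'⟩ := hHf1 w hw
    rw [hab', cdot_add_left, cdot_add_left, cdot_add_left, cdot_smul_left, cdot_smul_left,
      hnormal w hw, hZbN0 w hw]
    ring
  have hwzbarZfun : ∀ w ∈ U, ∀ i, vwzbar (Xz X) w i = ((α w : ℝ) : ℂ) / 4 * Hvec X α w i := by
    intro w hw i
    have h4 : Hvec X α w i = (4 / ((α w : ℝ) : ℂ)) * vwzbar (Xz X) w i := rfl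
    have h5 : ((α w : ℝ) : ℂ) / 4 * (4 / ((α w : ℝ) : ℂ)) = 1 := by
      field_simp [hα0 w hw]
    rw [h4, ← mul_assoc, h5, one_mul]
  -- commutation
  have hswap : ∀ i, vwz (Xzbar X) z i = vwzbar (Xz X) z i := by
    intro i
    have hC2 : ContDiffAt ℝ 2 (fun w => XC X w i) z := ((hXCc i).contDiffAt hmem).of_le (WithTop.coe_le_coe.mpr le_top)
    exact (wz_wzbar_comm hC2).symm
  have hα4 : HasW (fun w => ((α w : ℝ) : ℂ) / 4) z (wz (fun w => ((α w : ℝ) : ℂ)) z / 4)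
      (wzbar (fun w => ((α w : ℝ) : ℂ)) z / 4) := hαW.div_const 4
  have hα2 : HasW (fun w => ((α w : ℝ) : ℂ) / 2) z (wz (fun w => ((α w : ℝ) : ℂ)) z / 2)
      (wzbar (fun w => ((α w : ℝ) : ℂ)) z / 2) := hαW.div_const 2
  have hq : ∀ i, wzbar (fun w => vwz (Xz X) w i) z
      = wz (fun w => ((α w : ℝ) : ℂ)) z / 4 * Hvec X α z i
        + ((α z : ℝ) : ℂ) / 4 * vwz (Hvec X α) z i := by
    intro i
    have hC2 : ContDiffAt ℝ 2 (fun w => Xz X w i) z := ((hZc i).contDiffAt hmem).of_le (WithTop.coe_le_coe.mpr le_top)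
    have h1 : wzbar (fun w => vwz (Xz X) w i) z = wz (fun w => vwzbar (Xz X) w i) z :=
      wz_wzbar_comm hC2
    have h2 : wz (fun w => vwzbar (Xz X) w i) z = wz (fun w => ((α w : ℝ) : ℂ) / 4 * Hvec X α w i) z :=
      wz_congrOn hU (fun w hw => hwzbarZfun w hw i) hz
    have hprod := hα4.mul (hHW i)
    rw [h1, h2, hprod.wz_eq]
  -- helpers for functions vanishing on U
  have wz_zero : ∀ {g : ℂ → ℂ}, Set.EqOn g (fun _ => (0:ℂ)) U → wz g z = 0 := by
    intro g hg
    rw [wz_congrOn hU hg hz, (hasW_const 0 z).wz_eq]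
  have wzbar_zero : ∀ {g : ℂ → ℂ}, Set.EqOn g (fun _ => (0:ℂ)) U → wzbar g z = 0 := by
    intro g hg
    rw [wzbar_congrOn hU hg hz, (hasW_const 0 z).wzbar_eq]
  obtain ⟨a, b, hab⟩ := hpar z hz
  have hNzb : vwzbar (XC ν) z
      = fun i => (starRingEnd ℂ) a * Xzbar X z i + (starRingEnd ℂ) b * Xz X z i := by
    funext i
    have c1 : (starRingEnd ℂ) (Xz X z i) = Xzbar X z i := (hconjXz z hz i).symm
    have c2 : (starRingEnd ℂ) (Xzbar X z i) = Xz X z i := by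
      rw [hconjXz z hz i, Complex.conj_conj]
    rw [hconjN i, hab]
    simp only [Pi.add_apply, Pi.smul_apply, smul_eq_mul, map_add, map_mul]
    rw [c1, c2]
  -- first derivatives of the isothermal relations
  have hZZ := hasW_cdot hZW hZW
  have e1p : cdot (vwz (Xz X) z) (Xz X z) = 0 := by
    have h0 : wz (fun w => cdot (Xz X w) (Xz X w)) z = 0 := wz_zero (fun w hw => hiso1 w hw)
    have h2 := hZZ.wz_eq.symm.trans h0
    have hcm := cdot_comm (Xz X z) (vwz (Xz X) z)
    linear_combination h2 / 2 - hcm / 2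
  have e1q : cdot (vwzbar (Xz X) z) (Xz X z) = 0 := by
    have h0 : wzbar (fun w => cdot (Xz X w) (Xz X w)) z = 0 := wzbar_zero (fun w hw => hiso1 w hw)
    have h2 := hZZ.wzbar_eq.symm.trans h0
    have hcm := cdot_comm (Xz X z) (vwzbar (Xz X) z)
    linear_combination h2 / 2 - hcm / 2
  have hsw : vwz (Xzbar X) z = vwzbar (Xz X) z := funext hswap
  have e3 : cdot (vwzbar (Xz X) z) (Xzbar X z) = 0 := by
    have hZbZb := hasW_cdot hZbW hZbW
    have h0 : wz (fun w => cdot (Xzbar X w) (Xzbar X w)) z = 0 :=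
      wz_zero (fun w hw => hZbZb0 w hw)
    have h2 := hZbZb.wz_eq.symm.trans h0
    rw [hsw] at h2
    have hcm := cdot_comm (Xzbar X z) (vwzbar (Xz X) z)
    linear_combination h2 / 2 - hcm / 2
  have hZZb := hasW_cdot hZW hZbW
  have e4 : cdot (vwz (Xz X) z) (Xzbar X z) = wz (fun w => ((α w : ℝ) : ℂ)) z / 2 := by
    have h0 : wz (fun w => cdot (Xz X w) (Xzbar X w)) z = wz (fun w => ((α w : ℝ) : ℂ) / 2) z :=
      wz_congrOn hU (fun w hw => hiso2 w hw) hz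
    have h2 := hZZb.wz_eq.symm.trans (h0.trans hα2.wz_eq)
    rw [hsw] at h2
    have hcm := cdot_comm (Xz X z) (vwzbar (Xz X) z)
    linear_combination h2 - hcm - e1q
  -- ν-related identities
  have hZN := hasW_cdot hZW hNW
  have e5 : Pnu X ν z + b * (((α z : ℝ) : ℂ) / 2) = 0 := by
    have h0 : wz (fun w => cdot (Xz X w) (XC ν w)) z = 0 := wz_zero (fun w hw => hnormal w hw)
    have h2 := hZN.wz_eq.symm.trans h0
    rw [hab, cdot_comb_right', hiso1 z hz, hiso2 z hz] at h2
    have hP : Pnu X ν z = cdot (vwz (Xz X) z) (XC ν z) := rfl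
    linear_combination h2 + hP
  have e6 : cdot (vwzbar (Xz X) z) (XC ν z) + (starRingEnd ℂ) a * (((α z : ℝ) : ℂ) / 2) = 0 := by
    have h0 : wzbar (fun w => cdot (Xz X w) (XC ν w)) z = 0 :=
      wzbar_zero (fun w hw => hnormal w hw)
    have h2 := hZN.wzbar_eq.symm.trans h0
    rw [hNzb, cdot_comb_right, hiso1 z hz, hiso2 z hz] at h2
    linear_combination h2
  have e7 : cdot (vwzbar (Xz X) z) (XC ν z) + a * (((α z : ℝ) : ℂ) / 2) = 0 := by
    have h0 : wz (fun w => cdot (Xzbar X w) (XC ν w)) z = 0 := wz_zero (fun w hw => hZbN0 w hw)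
    have hZbN := hasW_cdot hZbW hNW
    have h2 := hZbN.wz_eq.symm.trans h0
    rw [hsw, hab, cdot_comb_right', cdot_comm (Xzbar X z) (Xz X z), hiso2 z hz,
      hZbZb0 z hz] at h2
    linear_combination h2
  have hconja : (starRingEnd ℂ) a = a := by
    have hne : ((α z : ℝ) : ℂ) / 2 ≠ 0 := div_ne_zero (hα0 z hz) two_ne_zero
    have h0 : ((starRingEnd ℂ) a - a) * (((α z : ℝ) : ℂ) / 2) = 0 := by
      linear_combination e6 - e7
    rcases mul_eq_zero.mp h0 with h1 | h1
    · exact sub_eq_zero.mp h1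
    · exact absurd h1 hne
  have hHvec_rfl : Hvec X α z = (4 / ((α z : ℝ) : ℂ)) • vwzbar (Xz X) z := rfl
  have hHZi : cdot (Hvec X α z) (Xz X z) = 0 := by
    rw [hHvec_rfl, cdot_smul_left, e1q, mul_zero]
  have hHZb : cdot (Hvec X α z) (Xzbar X z) = 0 := by
    rw [hHvec_rfl, cdot_smul_left, e3, mul_zero]
  have hHN : cdot (Hvec X α z) (XC ν z) = -2 * a := by
    rw [hHvec_rfl, cdot_smul_left]
    have hval : cdot (vwzbar (Xz X) z) (XC ν z) = -(a * (((α z : ℝ) : ℂ) / 2)) := by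
      linear_combination e7
    rw [hval]
    field_simp [hα0 z hz]
    ring
  have hHNz : cdot (Hvec X α z) (vwz (XC ν) z) = 0 := by
    rw [hab, cdot_comb_right', hHZi, hHZb]
    ring
  -- derivative of the weighted mean curvature pairing
  have hHNW := hasW_cdot hHW hNW
  have hGW : ∀ i, HasW (fun w => gradC f X w i) z
      (∑ j, ((fderiv ℝ (fun x => fderiv ℝ f x (Pi.single i 1)) (X z) (Pi.single j 1) : ℝ) : ℂ)
        * Xz X z j)
      (∑ j, ((fderiv ℝ (fun x => fderiv ℝ f x (Pi.single i 1)) (X z) (Pi.single j 1) : ℝ) : ℂ)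
        * Xzbar X z j) := by
    intro i
    have hgrad : DifferentiableAt ℝ (fun x => fderiv ℝ f x (Pi.single i 1)) (X z) := by
      have h1 : ContDiff ℝ 1 (fderiv ℝ f) := hf.fderiv_right (by norm_num)
      exact ((h1.clm_apply contDiff_const).differentiable one_ne_zero).differentiableAt
    exact hasW_comp_real hgrad hXCW
  have hGNW := hasW_cdot hGW hNW
  have hHfNwz : wz (fun w => cdot (Hf w) (XC ν w)) z
      = (cdot (vwz (Hvec X α) z) (XC ν z) + cdot (Hvec X α z) (vwz (XC ν) z))
        + (cdot (fun i => ∑ j,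
            ((fderiv ℝ (fun x => fderiv ℝ f x (Pi.single i 1)) (X z) (Pi.single j 1) : ℝ) : ℂ)
              * Xz X z j) (XC ν z)
          + cdot (gradC f X z) (vwz (XC ν) z)) := by
    have h0 : wz (fun w => cdot (Hf w) (XC ν w)) z
        = wz (fun w => cdot (Hvec X α w) (XC ν w) + cdot (gradC f X w) (XC ν w)) z :=
      wz_congrOn hU (fun w hw => hHfN w hw) hz
    rw [h0, (hHNW.add hGNW).wz_eq]
  have hhess : cdot (fun i => ∑ j,
      ((fderiv ℝ (fun x => fderiv ℝ f x (Pi.single i 1)) (X z) (Pi.single j 1) : ℝ) : ℂ)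
        * Xz X z j) (XC ν z) = hessC f X z (Xz X z) (XC ν z) := by
    unfold cdot hessC
    simp only [Finset.sum_mul]
    rw [Finset.sum_comm]
    exact Finset.sum_congr rfl fun j _ => Finset.sum_congr rfl fun i _ => by ring
  have hGNz : cdot (gradC f X z) (vwz (XC ν) z)
      = a * cdot (gradC f X z) (Xz X z) + b * cdot (gradC f X z) (Xzbar X z) := by
    rw [hab, cdot_comb_right']
  -- the ∂/∂z̄ of P
  have hPW := hasW_cdot hWfW hNW
  have hsum1 : cdot (fun i => wzbar (fun w => vwz (Xz X) w i) z) (XC ν z)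
      = wz (fun w => ((α w : ℝ) : ℂ)) z / 4 * cdot (Hvec X α z) (XC ν z)
        + ((α z : ℝ) : ℂ) / 4 * cdot (vwz (Hvec X α) z) (XC ν z) := by
    unfold cdot
    rw [Finset.mul_sum, Finset.mul_sum, ← Finset.sum_add_distrib]
    refine Finset.sum_congr rfl fun i _ => ?_
    show wzbar (fun w => vwz (Xz X) w i) z * XC ν z i = _
    rw [hq i]; ring
  have hWNzb : cdot (vwz (Xz X) z) (vwzbar (XC ν) z)
      = a * (wz (fun w => ((α w : ℝ) : ℂ)) z / 2) := by
    rw [hNzb, cdot_comb_right, e4, e1p, hconja]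
    ring
  have hwzbarP : wzbar (fun w => cdot (vwz (Xz X) w) (XC ν w)) z
      = ((α z : ℝ) : ℂ) / 4 * cdot (vwz (Hvec X α) z) (XC ν z) := by
    have h2 := hPW.wzbar_eq
    rw [hsum1, hWNzb, hHN] at h2
    rw [h2]
    ring
  -- the weighted factor
  have hfXd : DifferentiableAt ℝ f (X z) := (hf.differentiable (by norm_num)).differentiableAt
  have hfXW : HasW (fun w => ((f (X w) : ℝ) : ℂ)) z
      (cdot (gradC f X z) (Xz X z)) (cdot (gradC f X z) (Xzbar X z)) :=
    hasW_comp_real hfXd hXCW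
  have hexph : HasW (fun w => -((f (X w) : ℝ) : ℂ) / 2) z
      (-(cdot (gradC f X z) (Xz X z)) / 2) (-(cdot (gradC f X z) (Xzbar X z)) / 2) :=
    (hfXW.neg).div_const 2
  have hE := hexph.expComp
  have hLHS := hE.mul hPW
  have hLHSval : wzbar (fun w => Complex.exp (-(f (X w) : ℂ) / 2) * Pnu X ν w) z
      = (Complex.exp (-(f (X z) : ℂ) / 2) * (-(cdot (gradC f X z) (Xzbar X z)) / 2))
          * Pnu X ν z
        + Complex.exp (-(f (X z) : ℂ) / 2)
          * wzbar (fun w => cdot (vwz (Xz X) w) (XC ν w)) z := by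
    rw [hPW.wzbar_eq]
    exact hLHS.wzbar_eq
  have hHfzN : cdot (fun i => Hf z i - gradC f X z i) (XC ν z) = -2 * a := by
    rw [cdot_sub_left, hHfN z hz, hHN]
    ring
  have hPval : Pnu X ν z = -(b * (((α z : ℝ) : ℂ) / 2)) := by linear_combination e5
  rw [hLHSval, hwzbarP, hHfNwz, hhess, hGNz, hHNz, hHfzN, hPval]
  ring
end

section
/- Let γ satisfy the self-shrinker ODE γ''/(1+γ'²) = (x/2 - 1/x)γ' - γ/2 near a point a with 0 < a < 2, and suppose (a²-4)γ'(a) = aγ(a) and a + γ(a)γ'(a) = 0. Then γ(a) = ±√(4-a²) and γ'(a) = ∓a/√(4-a²), so γ agrees near a with the circle profile β(x) = ±√(4-x²) (the surface is a piece of the sphere of radius 2). -/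
/-!
Along a solution of the self-shrinker ODE the function `v = x² + γ² - 4`, whose zero set is the
sphere of radius 2, satisfies the linear equation `v'' = (1 + γ'²) ((x/2 - 1/x) v' - v)`.
The two conditions at `a` give `v(a) = 0` and `v'(a) = 2(a + γ(a)γ'(a)) = 0`, so uniqueness for
linear ODEs forces `v = 0` near `a`, and the sign of `γ(a)` picks the branch of the circle.
-/

open Topology Filter Set

section SecondOrderLinear
variable {E : Type*} [NormedAddCommGroup E] [NormedSpace ℝ E]

lemma lipschitzWith_secondOrderLinear_system (p q : ℝ) :
    LipschitzWith (max 1 (‖p‖₊ + ‖q‖₊)) (fun w : E × E => (w.2, p • w.2 + q • w.1)) := by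
  have hp : LipschitzWith ‖p‖₊ (fun w : E × E => p • w.2) := by
    simpa only [mul_one, Function.comp_def] using
      (lipschitzWith_smul p).comp LipschitzWith.prod_snd
  have hq : LipschitzWith ‖q‖₊ (fun w : E × E => q • w.1) := by
    simpa only [mul_one, Function.comp_def] using
      (lipschitzWith_smul q).comp LipschitzWith.prod_fst
  exact LipschitzWith.prod_snd.prodMk (hp.add hq)

theorem eventuallyEq_zero_of_secondOrderLinear_ode {p q : ℝ → ℝ} {u u' : ℝ → E} {a : ℝ}
    (hp : ContinuousAt p a) (hq : ContinuousAt q a)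
    (hu : ∀ᶠ t in 𝓝 a, HasDerivAt u (u' t) t)
    (hu' : ∀ᶠ t in 𝓝 a, HasDerivAt u' (p t • u' t + q t • u t) t)
    (h0 : u a = 0) (h1 : u' a = 0) : u =ᶠ[𝓝 a] 0 := by
  let v : ℝ → E × E → E × E := fun t w => (w.2, p t • w.2 + q t • w.1)
  have hv : ∀ᶠ t in 𝓝 a, LipschitzOnWith (max 1 (‖p a‖₊ + 1 + (‖q a‖₊ + 1))) (v t) univ := by
    filter_upwards [hp.nnnorm.eventually (gt_mem_nhds (lt_add_one ‖p a‖₊)),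
      hq.nnnorm.eventually (gt_mem_nhds (lt_add_one ‖q a‖₊))] with t hpt hqt
    exact ((lipschitzWith_secondOrderLinear_system (p t) (q t)).weaken
      (max_le_max le_rfl (add_le_add hpt.le hqt.le))).lipschitzOnWith
  have hsol : ∀ᶠ t in 𝓝 a, HasDerivAt (fun t => (u t, u' t)) (v t (u t, u' t)) t ∧
      (u t, u' t) ∈ univ := by
    filter_upwards [hu, hu'] with t hut hu't
    exact ⟨hut.prodMk hu't, trivial⟩
  have hzero : ∀ᶠ t in 𝓝 a, HasDerivAt (fun _ => (0 : E × E)) (v t 0) t ∧ (0 : E × E) ∈ univ :=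
    .of_forall fun t => ⟨(hasDerivAt_const t 0).congr_deriv (by ext <;> simp [v]), trivial⟩
  exact (ODE_solution_unique_of_eventually hv hsol hzero (by simp [h0, h1])).fun_comp Prod.fst

end SecondOrderLinear

theorem eventually_sq_add_sq_eq_four_of_selfShrinker_ode {γ : ℝ → ℝ} {I : Set ℝ} {a : ℝ}
    (hI : IsOpen I) (hI0 : (0 : ℝ) ∉ I) (haI : a ∈ I) (hsm : ContDiffOn ℝ 2 γ I)
    (hode : ∀ x ∈ I,
      deriv (deriv γ) x / (1 + (deriv γ x) ^ 2) = (x / 2 - 1 / x) * deriv γ x - γ x / 2)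
    (h0 : a ^ 2 + γ a ^ 2 = 4) (h1 : a + γ a * deriv γ a = 0) :
    ∀ᶠ x in 𝓝 a, x ^ 2 + γ x ^ 2 = 4 := by
  have hγ' : ContDiffOn ℝ 1 (deriv γ) I := hsm.deriv_of_isOpen hI (by norm_num)
  have hγ : ∀ x ∈ I, HasDerivAt γ (deriv γ x) x := fun x hx =>
    ((hsm.differentiableOn (by norm_num) x hx).differentiableAt (hI.mem_nhds hx)).hasDerivAt
  have hγ'' : ∀ x ∈ I, HasDerivAt (deriv γ) (deriv (deriv γ) x) x := fun x hx =>
    ((hγ'.differentiableOn (by norm_num) x hx).differentiableAt (hI.mem_nhds hx)).hasDerivAt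
  have hγ'a : ContinuousAt (deriv γ) a := hγ'.continuousOn.continuousAt (hI.mem_nhds haI)
  have ha0 : a ≠ 0 := fun h => hI0 (h ▸ haI)
  suffices (fun x => x ^ 2 + γ x ^ 2 - 4) =ᶠ[𝓝 a] 0 from this.mono fun x hx => by
    simp only [Pi.zero_apply] at hx; linarith
  refine eventuallyEq_zero_of_secondOrderLinear_ode
    (u' := fun x => 2 * x + 2 * (γ x * deriv γ x))
    (p := fun x => (1 + deriv γ x ^ 2) * (x / 2 - 1 / x)) (q := fun x => -(1 + deriv γ x ^ 2))
    (by fun_prop (disch := exact ha0)) (by fun_prop) ?_ ?_ (by linarith) (by linarith)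
  · filter_upwards [hI.mem_nhds haI] with x hx
    exact (((hasDerivAt_pow 2 x).add ((hγ x hx).pow 2)).sub_const 4).congr_deriv (by ring)
  · filter_upwards [hI.mem_nhds haI] with x hx
    have hx0 : x ≠ 0 := fun h => hI0 (h ▸ hx)
    have hγ''x : deriv (deriv γ) x =
        (1 + deriv γ x ^ 2) * ((x / 2 - 1 / x) * deriv γ x - γ x / 2) := by
      rw [← hode x hx]
      field_simp
    refine (((hasDerivAt_id' x).const_mul 2).add
      (((hγ x hx).mul (hγ'' x hx)).const_mul 2)).congr_deriv ?_
    rw [smul_eq_mul, smul_eq_mul, hγ''x]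
    field_simp
    ring

lemma eventually_eq_sqrt_of_sq_eq {f g : ℝ → ℝ} {a : ℝ} (hf : ContinuousAt f a) (ha : 0 < f a)
    (h : ∀ᶠ x in 𝓝 a, f x ^ 2 = g x) : ∀ᶠ x in 𝓝 a, f x = √(g x) := by
  filter_upwards [h, hf.eventually (lt_mem_nhds ha)] with x hx hpos
  rw [← hx, Real.sqrt_sq hpos.le]

theorem stmt_18_general (γ : ℝ → ℝ) (I : Set ℝ) (hI : IsOpen I) (hIsub : I ⊆ Set.Ioo 0 2)
    (a : ℝ) (haI : a ∈ I) (ha : 0 < a)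
    (hsm : ContDiffOn ℝ 2 γ I)
    (hode : ∀ x ∈ I,
      deriv (deriv γ) x / (1 + (deriv γ x) ^ 2) =
        (x / 2 - 1 / x) * deriv γ x - γ x / 2)
    (humb : (a ^ 2 - 4) * deriv γ a = a * γ a)
    (hX : a + γ a * deriv γ a = 0) :
    (γ a = Real.sqrt (4 - a ^ 2) ∨ γ a = -Real.sqrt (4 - a ^ 2)) ∧
    deriv γ a = -a / γ a ∧
    ((∀ᶠ x in 𝓝 a, γ x = Real.sqrt (4 - x ^ 2)) ∨
      (∀ᶠ x in 𝓝 a, γ x = -Real.sqrt (4 - x ^ 2))) := by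
  have hγa : γ a ≠ 0 := fun h => by simp [h] at hX; linarith
  have hsq : a ^ 2 + γ a ^ 2 = 4 := by
    have : a * (a ^ 2 + γ a ^ 2 - 4) = 0 := by linear_combination (a ^ 2 - 4) * hX - γ a * humb
    linarith [(mul_eq_zero.1 this).resolve_left ha.ne']
  have hcircle : ∀ᶠ x in 𝓝 a, γ x ^ 2 = 4 - x ^ 2 :=
    (eventually_sq_add_sq_eq_four_of_selfShrinker_ode hI (fun h => (hIsub h).1.false) haI hsm
      hode hsq hX).mono fun x hx => by linarith
  have hγ : ContinuousAt γ a := hsm.continuousOn.continuousAt (hI.mem_nhds haI)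
  have hderiv : deriv γ a = -a / γ a := by rw [eq_div_iff hγa]; linarith
  rcases hγa.lt_or_gt with hneg | hpos
  · have h : ∀ᶠ x in 𝓝 a, -γ x = √(4 - x ^ 2) := eventually_eq_sqrt_of_sq_eq hγ.neg
      (neg_pos.2 hneg) (by simpa only [Pi.neg_apply, neg_sq] using hcircle)
    exact ⟨Or.inr (by linarith [h.self_of_nhds]), hderiv, Or.inr (h.mono fun x hx => by linarith)⟩
  · have h := eventually_eq_sqrt_of_sq_eq hγ hpos hcircle
    exact ⟨Or.inl h.self_of_nhds, hderiv, Or.inl h⟩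

/-- If `γ` satisfies the self-shrinker ODE near `a` with `0 < a < 2`, and at `a` the
umbilicity relation `(a²-4)γ'(a) = aγ(a)` holds together with `a + γ(a)γ'(a) = 0`,
then `γ(a) = ±√(4-a²)`, `γ'(a) = ∓a/√(4-a²)` (that is, `γ'(a) = -a/γ(a)`), and `γ`
agrees near `a` with the circle profile `β(x) = ±√(4-x²)`. -/
theorem stmt_18 (γ : ℝ → ℝ) (I : Set ℝ) (hI : IsOpen I) (hIsub : I ⊆ Set.Ioo 0 2)
    (a : ℝ) (haI : a ∈ I) (ha : 0 < a) (ha2 : a < 2)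
    (hsm : ContDiffOn ℝ 2 γ I)
    (hode : ∀ x ∈ I,
      deriv (deriv γ) x / (1 + (deriv γ x) ^ 2) =
        (x / 2 - 1 / x) * deriv γ x - γ x / 2)
    (humb : (a ^ 2 - 4) * deriv γ a = a * γ a)
    (hX : a + γ a * deriv γ a = 0) :
    (γ a = Real.sqrt (4 - a ^ 2) ∨ γ a = -Real.sqrt (4 - a ^ 2)) ∧
    deriv γ a = -a / γ a ∧
    ((∀ᶠ x in 𝓝 a, γ x = Real.sqrt (4 - x ^ 2)) ∨
      (∀ᶠ x in 𝓝 a, γ x = -Real.sqrt (4 - x ^ 2))) :=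
  stmt_18_general γ I hI hIsub a haI ha hsm hode humb hX
end

section
/- For b > 0 with b ≠ 2, let γ solve the self-shrinker ODE γ''/(1+γ'²) = (x/2 - 1/x)γ' - γ/2 with γ(0) = b, γ'(0) = 0. Then for every p > 2 and every ε > 0 small, the integral ∫₀^ε ( |x + γγ'| · |γ - xγ'| · x / (√(1+γ'²) · |(x²-4)γ' - xγ|) )^p · x dx diverges; equivalently, the function √((‖X‖²-4H²)H²)/‖Φ‖ on the rotational surface is not in L^p on any neighborhood of the axis point. -/
open MeasureTheory Set Filter
open scoped ContDiff Topology


open scoped ContDiff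

private lemma mono_aux (f f' g g' : ℝ → ℝ) (a : ℝ)
    (hf : ∀ t ∈ Set.Icc 0 a, HasDerivAt f (f' t) t)
    (hg : ∀ t ∈ Set.Icc 0 a, HasDerivAt g (g' t) t)
    (hle : ∀ t ∈ Set.Icc 0 a, f' t ≤ g' t) (h0 : f 0 ≤ g 0) :
    ∀ x ∈ Set.Icc 0 a, f x ≤ g x := by
  intro x hx
  have h0a : (0:ℝ) ∈ Set.Icc 0 a := ⟨le_refl _, hx.1.trans hx.2⟩
  have hmono : MonotoneOn (fun t => g t - f t) (Set.Icc 0 a) := by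
    apply monotoneOn_of_deriv_nonneg (convex_Icc 0 a)
    · intro t ht
      exact ((hg t ht).sub (hf t ht)).differentiableAt.continuousAt.continuousWithinAt
    · intro t ht
      have ht' : t ∈ Set.Icc 0 a := interior_subset ht
      exact ((hg t ht').sub (hf t ht')).differentiableAt.differentiableWithinAt
    · intro t ht
      have ht' : t ∈ Set.Icc 0 a := interior_subset ht
      rw [show (fun t => g t - f t) = g - f from rfl, ((hg t ht').sub (hf t ht')).deriv]
      linarith [hle t ht']
  have := hmono h0a hx hx.1
  simp only at this
  linarith

private lemma poly_up (f f' : ℝ → ℝ) (K : ℝ) (n : ℕ) (a : ℝ)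
    (hf : ∀ t ∈ Set.Icc 0 a, HasDerivAt f (f' t) t)
    (hK : ∀ t ∈ Set.Icc 0 a, f' t ≤ K * t ^ n) (h0 : f 0 = 0) :
    ∀ x ∈ Set.Icc 0 a, f x ≤ K / (n + 1) * x ^ (n + 1) := by
  have hn : ((n:ℝ) + 1) ≠ 0 := by positivity
  have hg : ∀ t ∈ Set.Icc 0 a, HasDerivAt (fun y => K / (n+1) * y ^ (n+1)) (K * t ^ n) t := by
    intro t _
    have h := (hasDerivAt_pow (n+1) t).const_mul (K / ((n:ℝ)+1))
    refine h.congr_deriv ?_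
    simp only [Nat.add_sub_cancel]
    push_cast
    field_simp
  intro x hx
  exact mono_aux f f' _ _ a hf hg hK (by simp [h0]) x hx

private lemma poly_lo (f f' : ℝ → ℝ) (K : ℝ) (n : ℕ) (a : ℝ)
    (hf : ∀ t ∈ Set.Icc 0 a, HasDerivAt f (f' t) t)
    (hK : ∀ t ∈ Set.Icc 0 a, K * t ^ n ≤ f' t) (h0 : f 0 = 0) :
    ∀ x ∈ Set.Icc 0 a, K / (n + 1) * x ^ (n + 1) ≤ f x := by
  have hn : ((n:ℝ) + 1) ≠ 0 := by positivity
  have hg : ∀ t ∈ Set.Icc 0 a, HasDerivAt (fun y => K / (n+1) * y ^ (n+1)) (K * t ^ n) t := by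
    intro t _
    have h := (hasDerivAt_pow (n+1) t).const_mul (K / ((n:ℝ)+1))
    refine h.congr_deriv ?_
    simp only [Nat.add_sub_cancel]
    push_cast
    field_simp
  intro x hx
  exact mono_aux _ _ f f' a hg hf hK (by simp [h0]) x hx

/-- from `F3 ∈ [e/2, 3e/2]` on `[0,a]`, `e > 0`, and `F,F1,F2` vanishing at `0`,
get cubic two-sided bounds for `F`. -/
private lemma cubic_bound (F F1 F2 F3 : ℝ → ℝ) (a e : ℝ) (he : 0 < e)
    (hF : ∀ t ∈ Set.Icc 0 a, HasDerivAt F (F1 t) t)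
    (hF1 : ∀ t ∈ Set.Icc 0 a, HasDerivAt F1 (F2 t) t)
    (hF2 : ∀ t ∈ Set.Icc 0 a, HasDerivAt F2 (F3 t) t)
    (h0 : F 0 = 0) (h10 : F1 0 = 0) (h20 : F2 0 = 0)
    (hb : ∀ t ∈ Set.Icc 0 a, e/2 ≤ F3 t ∧ F3 t ≤ 3*e/2) :
    ∀ x ∈ Set.Icc 0 a, e/12 * x^3 ≤ F x ∧ F x ≤ e * x^3 := by
  have u2 : ∀ x ∈ Set.Icc 0 a, F2 x ≤ 3*e/2 * x := by
    intro x hx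
    have := poly_up F2 F3 (3*e/2) 0 a hF2 (fun t ht => by simpa using (hb t ht).2) h20 x hx
    norm_num at this
    linarith
  have l2 : ∀ x ∈ Set.Icc 0 a, e/2 * x ≤ F2 x := by
    intro x hx
    have := poly_lo F2 F3 (e/2) 0 a hF2 (fun t ht => by simpa using (hb t ht).1) h20 x hx
    norm_num at this
    linarith
  have u1 : ∀ x ∈ Set.Icc 0 a, F1 x ≤ 3*e/4 * x^2 := by
    intro x hx
    have := poly_up F1 F2 (3*e/2) 1 a hF1 (fun t ht => by simpa using u2 t ht) h10 x hx
    norm_num at this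
    linarith
  have l1 : ∀ x ∈ Set.Icc 0 a, e/4 * x^2 ≤ F1 x := by
    intro x hx
    have := poly_lo F1 F2 (e/2) 1 a hF1 (fun t ht => by simpa using l2 t ht) h10 x hx
    norm_num at this
    linarith
  intro x hx
  constructor
  · have := poly_lo F F1 (e/4) 2 a hF (fun t ht => by simpa using l1 t ht) h0 x hx
    norm_num at this
    linarith
  · have := poly_up F F1 (3*e/4) 2 a hF (fun t ht => by simpa using u1 t ht) h0 x hx
    have hx3 : (0:ℝ) ≤ x^3 := pow_nonneg hx.1 3
    norm_num at this
    nlinarith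


private lemma eq_zero_deriv {s : Set ℝ} (hs : IsOpen s) {f : ℝ → ℝ} {f' x : ℝ} (hx : x ∈ s)
    (hf : HasDerivAt f f' x) (hz : ∀ y ∈ s, f y = 0) : f' = 0 := by
  have h0 : HasDerivAt f 0 x :=
    (hasDerivAt_const x 0).congr_of_eventuallyEq (Filter.eventually_of_mem (hs.mem_nhds hx) hz)
  exact hf.unique h0


set_option maxHeartbeats 2000000 in
/-- Necessity of the hypothesis in the Hopf-type rigidity theorem (Drugan's example):
for `b > 0`, `b ≠ 2`, if `γ` solves the rotational self-shrinker ODE with `γ(0) = b`,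
`γ'(0) = 0`, then for every `p > 2` and every sufficiently small `ε > 0` the integral
`∫₀^ε (|x + γγ'|·|γ - xγ'|·x / (√(1+γ'²)·|(x²-4)γ' - xγ|))^p · x dx` diverges; i.e.
`√((‖X‖²-4H²)H²)/‖Φ‖` is not in `L^p` near the axis point. -/
theorem stmt_19 (b : ℝ) (hb : 0 < b) (hb2 : b ≠ 2) (γ : ℝ → ℝ) (I : Set ℝ)
    (hI : IsOpen I) (h0I : (0:ℝ) ∈ I) (hsm : ContDiffOn ℝ (⊤ : ℕ∞) γ I)
    (hode : ∀ x ∈ I, x ≠ 0 →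
      deriv (deriv γ) x / (1 + (deriv γ x) ^ 2) =
        (x / 2 - 1 / x) * deriv γ x - γ x / 2)
    (hγ0 : γ 0 = b) (hγ'0 : deriv γ 0 = 0) :
    ∀ p : ℝ, 2 < p → ∃ ε₀ > 0, ∀ ε : ℝ, 0 < ε → ε < ε₀ →
      ¬ IntegrableOn
          (fun x => (|x + γ x * deriv γ x| * |γ x - x * deriv γ x| * x /
            (Real.sqrt (1 + (deriv γ x) ^ 2) *
              |(x ^ 2 - 4) * deriv γ x - x * γ x|)) ^ p * x)
          (Set.Ioo 0 ε) := by
  intro p hp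
  have hp0 : (0:ℝ) ≤ p := by linarith
  set g1 := deriv γ with hg1d
  set g2 := deriv g1 with hg2d
  set g3 := deriv g2 with hg3d
  set g4 := deriv g3 with hg4d
  set g5 := deriv g4 with hg5d
  have step : ∀ f : ℝ → ℝ, ContDiffOn ℝ ∞ f I →
      ContDiffOn ℝ ∞ (deriv f) I ∧ ∀ x ∈ I, HasDerivAt f (deriv f x) x := by
    intro f hf
    obtain ⟨hdiff, hcd⟩ := (contDiffOn_infty_iff_deriv_of_isOpen hI).1 hf
    exact ⟨hcd, fun x hx => (hdiff.differentiableAt (hI.mem_nhds hx)).hasDerivAt⟩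
  obtain ⟨c1, hd0⟩ := step γ (hsm.of_le (mod_cast le_top))
  rw [← hg1d] at c1 hd0
  obtain ⟨c2, hd1⟩ := step g1 c1
  rw [← hg2d] at c2 hd1
  obtain ⟨c3, hd2⟩ := step g2 c2
  rw [← hg3d] at c3 hd2
  obtain ⟨c4, hd3⟩ := step g3 c3
  rw [← hg4d] at c4 hd3
  obtain ⟨c5, hd4⟩ := step g4 c4
  rw [← hg5d] at c5 hd4
  have hb4 : b^2 ≠ 4 := fun h => hb2 (by nlinarith)
  have hQd : ∀ x ∈ I, HasDerivAt (fun y => 1 + g1 y ^ 2) (2 * g1 x * g2 x) x := fun x hx =>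
    (((hd1 x hx).pow 2).const_add 1).congr_deriv (by push_cast [id_eq]; try ring)
  have hAd : ∀ x ∈ I, HasDerivAt (fun y => (y^2 - 2)/2 * g1 y - y * γ y / 2)
      (x * g1 x + (x^2 - 2)/2 * g2 x - (γ x + x * g1 x)/2) x := fun x hx =>
    (((((hasDerivAt_pow 2 x).sub_const 2).div_const 2).mul (hd1 x hx)).sub
      (((hasDerivAt_id x).mul (hd0 x hx)).div_const 2)).congr_deriv (by push_cast [id_eq]; try ring)
  have hBd : ∀ x ∈ I, HasDerivAt
      (fun y => y * g1 y + (y^2 - 2)/2 * g2 y - (γ y + y * g1 y)/2)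
      (g1 x + x * g2 x + (x * g2 x + (x^2-2)/2 * g3 x) - (g1 x + (g1 x + x * g2 x))/2) x :=
    fun x hx =>
    ((((hasDerivAt_id x).mul (hd1 x hx)).add
        ((((hasDerivAt_pow 2 x).sub_const 2).div_const 2).mul (hd2 x hx))).sub
      (((hd0 x hx).add ((hasDerivAt_id x).mul (hd1 x hx))).div_const 2)).congr_deriv
      (by push_cast [id_eq]; try ring)
  have hB1d : ∀ x ∈ I, HasDerivAt
      (fun y => g1 y + y * g2 y + (y * g2 y + (y^2-2)/2 * g3 y) - (g1 y + (g1 y + y * g2 y))/2)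
      (g2 x + (g2 x + x * g3 x) + ((g2 x + x * g3 x) + (x * g3 x + (x^2-2)/2 * g4 x))
        - (g2 x + (g2 x + (g2 x + x * g3 x)))/2) x := fun x hx =>
    ((((hd1 x hx).add ((hasDerivAt_id x).mul (hd2 x hx))).add
        (((hasDerivAt_id x).mul (hd2 x hx)).add
          ((((hasDerivAt_pow 2 x).sub_const 2).div_const 2).mul (hd3 x hx)))).sub
      (((hd1 x hx).add ((hd1 x hx).add
        ((hasDerivAt_id x).mul (hd2 x hx)))).div_const 2)).congr_deriv
      (by push_cast [id_eq]; try ring)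
  have hhd : ∀ x ∈ I, HasDerivAt
      (fun y => y * g2 y - (1 + g1 y ^ 2) * ((y^2 - 2)/2 * g1 y - y * γ y / 2))
      (1 * g2 x + x * g3 x - (2 * g1 x * g2 x * ((x^2 - 2)/2 * g1 x - x * γ x / 2)
        + (1 + g1 x ^ 2) * (x * g1 x + (x^2 - 2)/2 * g2 x - (γ x + x * g1 x)/2))) x :=
    fun x hx =>
    (((hasDerivAt_id x).mul (hd2 x hx)).sub ((hQd x hx).mul (hAd x hx))).congr_deriv
      (by push_cast [id_eq]; try ring)
  have hz0 : ∀ x ∈ I, x * g2 x - (1 + g1 x ^ 2) * ((x^2 - 2)/2 * g1 x - x * γ x / 2) = 0 := by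
    intro x hx
    rcases eq_or_ne x 0 with rfl | hne
    · norm_num [hγ'0]
    · have h := hode x hx hne
      have hq : (0:ℝ) < 1 + g1 x ^ 2 := by positivity
      rw [div_eq_iff (ne_of_gt hq)] at h
      rw [h]
      field_simp
      ring
  have hz1 : ∀ x ∈ I, 1 * g2 x + x * g3 x - (2 * g1 x * g2 x * ((x^2 - 2)/2 * g1 x - x * γ x / 2)
      + (1 + g1 x ^ 2) * (x * g1 x + (x^2 - 2)/2 * g2 x - (γ x + x * g1 x)/2)) = 0 :=
    fun x hx => eq_zero_deriv hI hx (hhd x hx) hz0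
  have hg20 : g2 0 = -(b/4) := by
    have e := hz1 0 h0I
    norm_num [hγ'0, hγ0] at e
    linarith
  have hh1d : ∀ x ∈ I, HasDerivAt
      (fun y => 1 * g2 y + y * g3 y - (2 * g1 y * g2 y * ((y^2 - 2)/2 * g1 y - y * γ y / 2)
        + (1 + g1 y ^ 2) * (y * g1 y + (y^2 - 2)/2 * g2 y - (γ y + y * g1 y)/2)))
      (g3 x + (g3 x + x * g4 x) -
        ((2 * g2 x * g2 x + 2 * g1 x * g3 x) * ((x^2 - 2)/2 * g1 x - x * γ x / 2)
          + 2 * g1 x * g2 x * (x * g1 x + (x^2 - 2)/2 * g2 x - (γ x + x * g1 x)/2)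
          + (2 * g1 x * g2 x * (x * g1 x + (x^2 - 2)/2 * g2 x - (γ x + x * g1 x)/2)
            + (1 + g1 x ^ 2) * (g1 x + x * g2 x + (x * g2 x + (x^2-2)/2 * g3 x)
              - (g1 x + (g1 x + x * g2 x))/2)))) x := fun x hx =>
    ((((hd2 x hx).const_mul 1).add ((hasDerivAt_id x).mul (hd3 x hx))).sub
      (((((hd1 x hx).const_mul 2).mul (hd2 x hx)).mul (hAd x hx)).add
        ((hQd x hx).mul (hBd x hx)))).congr_deriv (by push_cast [id_eq, Pi.mul_apply]; try ring)
  have hz2 : ∀ x ∈ I, g3 x + (g3 x + x * g4 x) -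
      ((2 * g2 x * g2 x + 2 * g1 x * g3 x) * ((x^2 - 2)/2 * g1 x - x * γ x / 2)
        + 2 * g1 x * g2 x * (x * g1 x + (x^2 - 2)/2 * g2 x - (γ x + x * g1 x)/2)
        + (2 * g1 x * g2 x * (x * g1 x + (x^2 - 2)/2 * g2 x - (γ x + x * g1 x)/2)
          + (1 + g1 x ^ 2) * (g1 x + x * g2 x + (x * g2 x + (x^2-2)/2 * g3 x)
            - (g1 x + (g1 x + x * g2 x))/2))) = 0 :=
    fun x hx => eq_zero_deriv hI hx (hh1d x hx) hz1
  have hg30 : g3 0 = 0 := by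
    have e := hz2 0 h0I
    norm_num [hγ'0, hγ0, hg20] at e
    linarith
  have hz3 := eq_zero_deriv hI h0I
    ((((hd3 0 h0I).add ((hd3 0 h0I).add ((hasDerivAt_id 0).mul (hd4 0 h0I)))).sub
      (((((((hd2 0 h0I).const_mul 2).mul (hd2 0 h0I)).add
          (((hd1 0 h0I).const_mul 2).mul (hd3 0 h0I))).mul (hAd 0 h0I)).add
        ((((hd1 0 h0I).const_mul 2).mul (hd2 0 h0I)).mul (hBd 0 h0I))).add
        (((((hd1 0 h0I).const_mul 2).mul (hd2 0 h0I)).mul (hBd 0 h0I)).add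
          ((hQd 0 h0I).mul (hB1d 0 h0I)))))) hz2
  have hg40 : g4 0 = -(3*b/32) - 3*b^3/128 := by
    norm_num [hγ'0, hγ0, hg20, hg30] at hz3
    linarith
  -- D chain
  have hDd : ∀ x ∈ I, HasDerivAt (fun y => (y^2 - 4) * g1 y - y * γ y)
      (2*x*g1 x + (x^2-4)*g2 x - (γ x + x*g1 x)) x := fun x hx =>
    ((((hasDerivAt_pow 2 x).sub_const 4).mul (hd1 x hx)).sub
      ((hasDerivAt_id x).mul (hd0 x hx))).congr_deriv (by push_cast [id_eq]; try ring)
  have hD1d : ∀ x ∈ I, HasDerivAt (fun y => 2*y*g1 y + (y^2-4)*g2 y - (γ y + y*g1 y))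
      (3*x*g2 x + (x^2-4)*g3 x) x := fun x hx =>
    (((((hasDerivAt_id x).const_mul 2).mul (hd1 x hx)).add
      (((hasDerivAt_pow 2 x).sub_const 4).mul (hd2 x hx))).sub
      ((hd0 x hx).add ((hasDerivAt_id x).mul (hd1 x hx)))).congr_deriv
      (by push_cast [id_eq]; try ring)
  have hD2d : ∀ x ∈ I, HasDerivAt (fun y => 3*y*g2 y + (y^2-4)*g3 y)
      (3*g2 x + 5*x*g3 x + (x^2-4)*g4 x) x := fun x hx =>
    ((((hasDerivAt_id x).const_mul 3).mul (hd2 x hx)).add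
      (((hasDerivAt_pow 2 x).sub_const 4).mul (hd3 x hx))).congr_deriv
      (by push_cast [id_eq]; try ring)
  set d : ℝ := -(3*b/8) + 3*b^3/32 with hdd
  clear_value d
  have hdne : d ≠ 0 := by
    rw [hdd]
    intro h0
    apply hb4
    have hbb : b*(b^2-4) = 0 := by linear_combination (32/3 : ℝ) * h0
    rcases mul_eq_zero.1 hbb with h1 | h2
    · exact absurd h1 (ne_of_gt hb)
    · linarith
  set κ : ℝ := 1 - b^2/4 with hκd
  clear_value κ
  have hκne : κ ≠ 0 := by
    rw [hκd]
    intro h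
    exact hb4 (by linarith)
  have hNd : ∀ x ∈ I, HasDerivAt (fun y => y + γ y * g1 y) (1 + (g1 x * g1 x + γ x * g2 x)) x :=
    fun x hx => ((hasDerivAt_id x).add ((hd0 x hx).mul (hd1 x hx))).congr_deriv
      (by push_cast [id_eq]; try ring)
  -- continuity and eventual bounds
  have hcγ : ContinuousAt γ 0 := (hd0 0 h0I).differentiableAt.continuousAt
  have hc1 : ContinuousAt g1 0 := (hd1 0 h0I).differentiableAt.continuousAt
  have hc2 : ContinuousAt g2 0 := (hd2 0 h0I).differentiableAt.continuousAt
  have hc3 : ContinuousAt g3 0 := (hd3 0 h0I).differentiableAt.continuousAt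
  have hc4 : ContinuousAt g4 0 := (hd4 0 h0I).differentiableAt.continuousAt
  have hT3 : Tendsto (fun t => 3*g2 t + 5*t*g3 t + (t^2-4)*g4 t) (𝓝 0) (𝓝 d) := by
    have hc : ContinuousAt (fun t => 3*g2 t + 5*t*g3 t + (t^2-4)*g4 t) 0 :=
      ((continuousAt_const.mul hc2).add ((continuousAt_const.mul continuousAt_id).mul hc3)).add
        (((continuousAt_id.pow 2).sub continuousAt_const).mul hc4)
    have h0 : 3*g2 0 + 5*(0:ℝ)*g3 0 + ((0:ℝ)^2-4)*g4 0 = d := by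
      rw [hg20, hg40, hdd]; ring
    rw [← h0]; exact hc
  have hTN : Tendsto (fun t => 1 + (g1 t * g1 t + γ t * g2 t)) (𝓝 0) (𝓝 κ) := by
    have hc : ContinuousAt (fun t => 1 + (g1 t * g1 t + γ t * g2 t)) 0 :=
      continuousAt_const.add ((hc1.mul hc1).add (hcγ.mul hc2))
    have h0 : 1 + (g1 0 * g1 0 + γ 0 * g2 0) = κ := by
      rw [hγ'0, hγ0, hg20, hκd]; ring
    rw [← h0]; exact hc
  have hTG : Tendsto (fun t => γ t - t * g1 t) (𝓝 0) (𝓝 b) := by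
    have hc : ContinuousAt (fun t => γ t - t * g1 t) 0 :=
      hcγ.sub (continuousAt_id.mul hc1)
    have h0 : γ 0 - 0 * g1 0 = b := by rw [hγ0]; ring
    rw [← h0]; exact hc
  have hTsq : Tendsto (fun t => g1 t ^ 2) (𝓝 0) (𝓝 0) := by
    have hc : ContinuousAt (fun t => g1 t ^ 2) 0 := hc1.pow 2
    have h := hc.tendsto
    rw [hγ'0] at h
    norm_num at h
    exact h
  have habs : 0 < |d| := abs_pos.2 hdne
  have habκ : 0 < |κ| := abs_pos.2 hκne
  have e1 := hT3.eventually_lt_const (show d < d + |d|/2 by linarith)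
  have e2 := hT3.eventually_const_lt (show d - |d|/2 < d by linarith)
  have e3 := hTN.eventually_lt_const (show κ < κ + |κ|/2 by linarith)
  have e4 := hTN.eventually_const_lt (show κ - |κ|/2 < κ by linarith)
  have e5 := hTG.eventually_const_lt (show b/2 < b by linarith)
  have e6 := hTsq.eventually_lt_const (show (0:ℝ) < 3 by norm_num)
  obtain ⟨δ, hδpos, hδ⟩ :=
    Metric.eventually_nhds_iff.1 (((e1.and e2).and (e3.and e4)).and (e5.and e6))
  obtain ⟨r, hrpos, hrI⟩ := Metric.isOpen_iff.1 hI 0 h0I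
  set a := min (δ/2) (r/2) with had
  have ha0 : 0 < a := lt_min (by linarith) (by linarith)
  have haI : ∀ t ∈ Set.Icc (0:ℝ) a, t ∈ I := by
    intro t ht
    apply hrI
    rw [Metric.mem_ball, Real.dist_eq, sub_zero, abs_of_nonneg ht.1]
    have h1 : t ≤ a := ht.2
    have h2 : a ≤ r/2 := min_le_right _ _
    linarith
  have haP : ∀ t ∈ Set.Icc (0:ℝ) a,
      ((3*g2 t + 5*t*g3 t + (t^2-4)*g4 t < d + |d|/2 ∧
        d - |d|/2 < 3*g2 t + 5*t*g3 t + (t^2-4)*g4 t) ∧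
       (1 + (g1 t * g1 t + γ t * g2 t) < κ + |κ|/2 ∧
        κ - |κ|/2 < 1 + (g1 t * g1 t + γ t * g2 t))) ∧
      (b/2 < γ t - t * g1 t ∧ g1 t ^ 2 < 3) := by
    intro t ht
    apply hδ
    rw [Real.dist_eq, sub_zero, abs_of_nonneg ht.1]
    have h1 : t ≤ a := ht.2
    have h2 : a ≤ δ/2 := min_le_left _ _
    linarith
  -- two-sided cubic bound for D
  have hDbd : ∀ x ∈ Set.Icc (0:ℝ) a,
      |d|/12 * x^3 ≤ |(x^2-4)*g1 x - x*γ x| ∧ |(x^2-4)*g1 x - x*γ x| ≤ |d| * x^3 := by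
    rcases lt_or_gt_of_ne hdne with hdneg | hdpos
    · have hcb := cubic_bound (fun y => -((y^2 - 4) * g1 y - y * γ y))
        (fun y => -(2*y*g1 y + (y^2-4)*g2 y - (γ y + y*g1 y)))
        (fun y => -(3*y*g2 y + (y^2-4)*g3 y))
        (fun y => -(3*g2 y + 5*y*g3 y + (y^2-4)*g4 y)) a (-d) (by linarith)
        (fun t ht => (hDd t (haI t ht)).neg) (fun t ht => (hD1d t (haI t ht)).neg)
        (fun t ht => (hD2d t (haI t ht)).neg)
        (by show -(((0:ℝ)^2 - 4) * g1 0 - 0 * γ 0) = 0; rw [hγ'0]; ring)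
        (by show -(2*(0:ℝ)*g1 0 + ((0:ℝ)^2-4)*g2 0 - (γ 0 + 0*g1 0)) = 0
            rw [hγ'0, hγ0, hg20]; ring)
        (by show -(3*(0:ℝ)*g2 0 + ((0:ℝ)^2-4)*g3 0) = 0; rw [hg30]; ring)
        (by intro t ht
            obtain ⟨⟨⟨u1, u2⟩, _⟩, _⟩ := haP t ht
            rw [abs_of_neg hdneg] at u1 u2
            constructor <;> [linarith; linarith])
      intro x hx
      obtain ⟨l, u⟩ := hcb x hx
      have l' : -d/12 * x^3 ≤ -((x^2-4)*g1 x - x*γ x) := l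
      have u' : -((x^2-4)*g1 x - x*γ x) ≤ -d * x^3 := u
      have hx3 : (0:ℝ) ≤ x^3 := pow_nonneg hx.1 3
      have hDle : (x^2-4)*g1 x - x*γ x ≤ 0 := by
        have h1 : (0:ℝ) ≤ (-d)/12 * x^3 := mul_nonneg (by linarith) hx3
        linarith
      rw [abs_of_nonpos hDle, abs_of_neg hdneg]
      constructor <;> [linarith; linarith]
    · have hcb := cubic_bound (fun y => (y^2 - 4) * g1 y - y * γ y)
        (fun y => 2*y*g1 y + (y^2-4)*g2 y - (γ y + y*g1 y))
        (fun y => 3*y*g2 y + (y^2-4)*g3 y)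
        (fun y => 3*g2 y + 5*y*g3 y + (y^2-4)*g4 y) a d (by linarith)
        (fun t ht => hDd t (haI t ht)) (fun t ht => hD1d t (haI t ht))
        (fun t ht => hD2d t (haI t ht))
        (by show (((0:ℝ)^2 - 4) * g1 0 - 0 * γ 0) = 0; rw [hγ'0]; ring)
        (by show (2*(0:ℝ)*g1 0 + ((0:ℝ)^2-4)*g2 0 - (γ 0 + 0*g1 0)) = 0
            rw [hγ'0, hγ0, hg20]; ring)
        (by show (3*(0:ℝ)*g2 0 + ((0:ℝ)^2-4)*g3 0) = 0; rw [hg30]; ring)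
        (by intro t ht
            obtain ⟨⟨⟨u1, u2⟩, _⟩, _⟩ := haP t ht
            rw [abs_of_pos hdpos] at u1 u2
            constructor <;> [linarith; linarith])
      intro x hx
      obtain ⟨l, u⟩ := hcb x hx
      have l' : d/12 * x^3 ≤ (x^2-4)*g1 x - x*γ x := l
      have u' : (x^2-4)*g1 x - x*γ x ≤ d * x^3 := u
      have hx3 : (0:ℝ) ≤ x^3 := pow_nonneg hx.1 3
      have hDge : 0 ≤ (x^2-4)*g1 x - x*γ x := by
        have h1 : (0:ℝ) ≤ d/12 * x^3 := mul_nonneg (by linarith) hx3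
        linarith
      rw [abs_of_nonneg hDge, abs_of_pos hdpos]
      constructor <;> [linarith; linarith]
  -- linear lower bound for N
  have hNbd : ∀ x ∈ Set.Icc (0:ℝ) a, |κ|/2 * x ≤ |x + γ x * g1 x| := by
    rcases lt_or_gt_of_ne hκne with hκneg | hκpos
    · have hlo := poly_lo (fun y => -(y + γ y * g1 y))
        (fun t => -(1 + (g1 t * g1 t + γ t * g2 t))) (|κ|/2) 0 a
        (fun t ht => (hNd t (haI t ht)).neg)
        (by intro t ht
            obtain ⟨⟨_, ⟨u3, _⟩⟩, _⟩ := haP t ht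
            rw [abs_of_neg hκneg] at u3 ⊢
            norm_num
            linarith)
        (by show -((0:ℝ) + γ 0 * g1 0) = 0; rw [hγ'0]; ring)
      intro x hx
      have h := hlo x hx
      norm_num at h
      have h2 : -(x + γ x * g1 x) ≤ |x + γ x * g1 x| := neg_le_abs _
      linarith
    · have hlo := poly_lo (fun y => y + γ y * g1 y)
        (fun t => 1 + (g1 t * g1 t + γ t * g2 t)) (|κ|/2) 0 a
        (fun t ht => hNd t (haI t ht))
        (by intro t ht
            obtain ⟨⟨_, ⟨_, u4⟩⟩, _⟩ := haP t ht
            rw [abs_of_pos hκpos] at u4 ⊢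
            norm_num
            linarith)
        (by show ((0:ℝ) + γ 0 * g1 0) = 0; rw [hγ'0]; ring)
      intro x hx
      have h := hlo x hx
      norm_num at h
      have h2 : (x + γ x * g1 x) ≤ |x + γ x * g1 x| := le_abs_self _
      linarith
  -- conclusion
  refine ⟨a, ha0, ?_⟩
  intro ε hε hεa hint
  have hsub : Set.Ioo (0:ℝ) ε ⊆ Set.Icc 0 a :=
    fun t ht => ⟨ht.1.le, (ht.2.trans hεa).le⟩
  set c₀ := |κ| * b / (8 * |d|) with hc₀d
  clear_value c₀
  have hc₀ : 0 < c₀ := by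
    rw [hc₀d]
    exact div_pos (mul_pos habκ hb) (by positivity)
  have hlow : ∀ x ∈ Set.Ioo (0:ℝ) ε, c₀^p * x^(1-p) ≤
      (|x + γ x * g1 x| * |γ x - x * g1 x| * x /
        (Real.sqrt (1 + g1 x ^ 2) * |(x ^ 2 - 4) * g1 x - x * γ x|)) ^ p * x := by
    intro x hx
    have hxa : x ∈ Set.Icc (0:ℝ) a := hsub hx
    have hx0 : 0 < x := hx.1
    obtain ⟨⟨_, _⟩, hc5, hc6⟩ := haP x hxa
    obtain ⟨hDl, hDu⟩ := hDbd x hxa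
    have hNb := hNbd x hxa
    have hGb : b/2 ≤ |γ x - x * g1 x| := (le_of_lt hc5).trans (le_abs_self _)
    have hsq_pos : 0 < Real.sqrt (1 + g1 x^2) := Real.sqrt_pos.2 (by positivity)
    have hsq_le : Real.sqrt (1 + g1 x^2) ≤ 2 := by
      have h4 : Real.sqrt 4 = 2 := by
        rw [show (4:ℝ) = 2^2 by norm_num]
        exact Real.sqrt_sq (by norm_num)
      calc Real.sqrt (1 + g1 x^2) ≤ Real.sqrt 4 := Real.sqrt_le_sqrt (by linarith)
        _ = 2 := h4
    have hDpos : 0 < |(x^2-4)*g1 x - x*γ x| :=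
      lt_of_lt_of_le (mul_pos (div_pos habs (by norm_num)) (pow_pos hx0 3)) hDl
    have hden_pos : 0 < Real.sqrt (1 + g1 x^2) * |(x^2-4)*g1 x - x*γ x| :=
      mul_pos hsq_pos hDpos
    have hnum_ge : |κ|/2 * x * (b/2) * x ≤ |x + γ x * g1 x| * |γ x - x * g1 x| * x := by
      have h1 : |κ|/2 * x * (b/2) ≤ |x + γ x * g1 x| * |γ x - x * g1 x| :=
        mul_le_mul hNb hGb (by positivity) (abs_nonneg _)
      exact mul_le_mul_of_nonneg_right h1 hx0.le
    have hden_le : Real.sqrt (1 + g1 x^2) * |(x^2-4)*g1 x - x*γ x| ≤ 2 * (|d| * x^3) :=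
      mul_le_mul hsq_le hDu (abs_nonneg _) (by norm_num)
    have hfrac : c₀ / x ≤ |x + γ x * g1 x| * |γ x - x * g1 x| * x /
        (Real.sqrt (1 + g1 x ^ 2) * |(x ^ 2 - 4) * g1 x - x * γ x|) := by
      have heq : c₀ / x = (|κ|/2 * x * (b/2) * x) / (2 * (|d| * x^3)) := by
        rw [hc₀d]
        field_simp
        ring
      rw [heq]
      exact div_le_div₀ (by positivity) hnum_ge hden_pos hden_le
    have hrp := Real.rpow_le_rpow (by positivity) hfrac hp0
    calc c₀^p * x^(1-p) = (c₀/x)^p * x := by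
          rw [Real.div_rpow hc₀.le hx0.le, Real.rpow_sub hx0, Real.rpow_one]
          field_simp
      _ ≤ _ := mul_le_mul_of_nonneg_right hrp hx0.le
  have hmeas : AEStronglyMeasurable (fun x:ℝ => c₀^p * x^(1-p))
      (volume.restrict (Set.Ioo 0 ε)) := by
    apply ContinuousOn.aestronglyMeasurable ?_ measurableSet_Ioo
    exact continuousOn_const.mul
      (continuousOn_id.rpow_const (fun x hx => Or.inl (ne_of_gt hx.1)))
  have hint2 : IntegrableOn (fun x:ℝ => c₀^p * x^(1-p)) (Set.Ioo 0 ε) := by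
    apply hint.mono' hmeas
    rw [ae_restrict_iff' measurableSet_Ioo]
    refine ae_of_all _ fun x hx => ?_
    rw [Real.norm_eq_abs, abs_of_nonneg
      (mul_nonneg (Real.rpow_nonneg hc₀.le p) (Real.rpow_nonneg hx.1.le (1-p)))]
    exact hlow x hx
  have hint3 : IntegrableOn (fun x:ℝ => x^(1-p)) (Set.Ioo 0 ε) := by
    have h := hint2.const_mul ((c₀^p)⁻¹)
    have hcp : c₀^p ≠ 0 := ne_of_gt (Real.rpow_pos_of_pos hc₀ p)
    have heq : (fun x:ℝ => (c₀^p)⁻¹ * (c₀^p * x^(1-p))) = fun x:ℝ => x^(1-p) := by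
      funext x
      field_simp
    rwa [heq] at h
  rw [intervalIntegral.integrableOn_Ioo_rpow_iff hε] at hint3
  linarith
end
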